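/- Let A, B, C_1, …, C_p, D_1, …, D_q be matrices in ℂ^{r×r} such that each D_j + kI is invertible for every integer k ≥ 0, A and B − I are positive stable, all needed gamma matrix functions are defined, and AB = BA. Then for all z in the region of absolute convergence, z A (d/dz) ₚR_q(A,B;z) = ₚR_q(A, B−I; z) − (B−I) · ₚR_q(A,B;z). -/

import Mathlib

open scoped BigOperators
open Matrix

noncomputable section

attribute [local instance] Matrix.frobeniusNormedAddCommGroup Matrix.frobeniusNormedRing
  Matrix.frobeniusNormedSpace Matrix.frobeniusNormedAlgebra

/-- `t ^ M = exp (M ln t)` for a real `t` and a square complex matrix `M`. -/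
def matRPow {r : ℕ} (M : Matrix (Fin r) (Fin r) ℂ) (t : ℝ) : Matrix (Fin r) (Fin r) ℂ :=
  NormedSpace.exp ((Real.log t : ℂ) • M)

/-- The gamma matrix function `Γ(A) = ∫₀^∞ e^{-t} t^{A-I} dt`. -/
def matGamma {r : ℕ} (A : Matrix (Fin r) (Fin r) ℂ) : Matrix (Fin r) (Fin r) ℂ :=
  ∫ t in Set.Ioi (0 : ℝ), Real.exp (-t) • matRPow (A - 1) t

/-- A complex square matrix is positive stable if every eigenvalue has positive real part. -/
def PosStable {r : ℕ} (A : Matrix (Fin r) (Fin r) ℂ) : Prop :=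
  ∀ μ ∈ spectrum ℂ A, 0 < μ.re

/-- The matrix Pochhammer symbol `(A)_n = A (A + I) ⋯ (A + (n-1) I)`. -/
def matPoch {r : ℕ} (A : Matrix (Fin r) (Fin r) ℂ) (n : ℕ) : Matrix (Fin r) (Fin r) ℂ :=
  ((List.range n).map (fun k => A + (k : ℂ) • (1 : Matrix (Fin r) (Fin r) ℂ))).prod

/-- The `n`-th coefficient matrix
`Γ⁻¹(nA+B) (C₁)_n ⋯ (C_p)_n (D₁)ₙ⁻¹ ⋯ (D_q)ₙ⁻¹` of the series `ₚR_q(A,B;z)`. -/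
def Rcoeff {r p q : ℕ} (A B : Matrix (Fin r) (Fin r) ℂ)
    (C : Fin p → Matrix (Fin r) (Fin r) ℂ) (D : Fin q → Matrix (Fin r) (Fin r) ℂ)
    (n : ℕ) : Matrix (Fin r) (Fin r) ℂ :=
  (matGamma ((n : ℂ) • A + B))⁻¹ *
    (List.ofFn (fun i => matPoch (C i) n)).prod *
    (List.ofFn (fun j => (matPoch (D j) n)⁻¹)).prod

/-- The matrix function `ₚR_q(A, B; z)`. -/
def Rfun {r p q : ℕ} (A B : Matrix (Fin r) (Fin r) ℂ)
    (C : Fin p → Matrix (Fin r) (Fin r) ℂ) (D : Fin q → Matrix (Fin r) (Fin r) ℂ)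
    (z : ℂ) : Matrix (Fin r) (Fin r) ℂ :=
  ∑' n : ℕ, (z ^ n / (n.factorial : ℂ)) • Rcoeff A B C D n

/-- Absolute convergence of the series `ₚR_q(A, B; z)` at the point `z`. -/
def RabsConv {r p q : ℕ} (A B : Matrix (Fin r) (Fin r) ℂ)
    (C : Fin p → Matrix (Fin r) (Fin r) ℂ) (D : Fin q → Matrix (Fin r) (Fin r) ℂ)
    (z : ℂ) : Prop :=
  Summable (fun n : ℕ => ‖(z ^ n / (n.factorial : ℂ)) • Rcoeff A B C D n‖)

/-- `z` lies in the (open) region of absolute convergence of the series `ₚR_q(A, B; ·)`: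
some point of strictly larger modulus still gives absolute convergence. -/
def InRegion {r p q : ℕ} (A B : Matrix (Fin r) (Fin r) ℂ)
    (C : Fin p → Matrix (Fin r) (Fin r) ℂ) (D : Fin q → Matrix (Fin r) (Fin r) ℂ)
    (z : ℂ) : Prop :=
  ∃ ρ : ℝ, ‖z‖ < ρ ∧ Summable (fun n : ℕ => ‖Rcoeff A B C D n‖ * ρ ^ n / (n.factorial : ℝ))

/-- The Euler operator `θ = z d/dz` applied termwise to the series `ₚR_q(A, B; z)`. -/
def thetaR {r p q : ℕ} (A B : Matrix (Fin r) (Fin r) ℂ)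
    (C : Fin p → Matrix (Fin r) (Fin r) ℂ) (D : Fin q → Matrix (Fin r) (Fin r) ℂ)
    (z : ℂ) : Matrix (Fin r) (Fin r) ℂ :=
  ∑' n : ℕ, (((n : ℂ) * z ^ n) / (n.factorial : ℂ)) • Rcoeff A B C D n


/-!
Termwise, `z A d/dz` multiplies the `n`-th term `zⁿ/n! · Γ⁻¹(nA+B) Πₙ` of `ₚR_q(A,B;z)` (where
`Πₙ` is the product of the Pochhammer factors) on the left by `nA = (nA + B − I) − (B − I)`.
For `M = nA + B`, the functional equation `Γ(M) = (M − I) Γ(M − I)`, together with the fact that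
`M − I` commutes with `Γ(M − I)`, gives `Γ⁻¹(M − I) = (M − I) Γ⁻¹(M)`; so
`(nA + B − I) Γ⁻¹(nA+B) Πₙ` is the `n`-th coefficient of `ₚR_q(A,B−I;z)`.

The functional equation `Γ(M + I) = M Γ(M)` is an integration by parts of `(e^{-t} t^M)'`.
Its boundary terms vanish because `‖t^M‖ = O(t^ε)` as `t → 0⁺` for positive stable `M`: on a
generalized eigenspace for `μ`, `exp(sM)` is `e^{sμ}` times a polynomial in `s`, and these
eigenspaces span `ℂ^r`. Termwise differentiation is justified by absolute convergence of the
series on a disc of radius `ρ > |z|`.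
-/

open NormedSpace MeasureTheory Set Filter Asymptotics Topology
open scoped Nat

theorem MeasureTheory.IntegrableOn.of_isBigO_principal {α E F : Type*} [MeasurableSpace α]
    {μ : Measure α} [NormedAddCommGroup E] [NormedAddCommGroup F] {f : α → E} {g : α → F}
    {s : Set α} (hs : MeasurableSet s) (hf : AEStronglyMeasurable f (μ.restrict s))
    (hfg : f =O[𝓟 s] g) (hg : IntegrableOn g s μ) : IntegrableOn f s μ := by
  obtain ⟨c, hc⟩ := hfg.bound
  exact (hg.norm.const_mul c).mono' hf
    ((ae_restrict_iff' hs).2 (.of_forall (eventually_principal.1 hc)))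

theorem integral_Ioi_of_hasDerivAt_of_tendsto_nhdsGT {E : Type*} [NormedAddCommGroup E]
    [NormedSpace ℝ E] [CompleteSpace E] {f f' : ℝ → E} {a : ℝ} {m₀ m : E}
    (hderiv : ∀ x ∈ Ioi a, HasDerivAt f (f' x) x) (hint : IntegrableOn f' (Ioi a))
    (ha : Tendsto f (𝓝[>] a) (𝓝 m₀)) (htop : Tendsto f atTop (𝓝 m)) :
    ∫ x in Ioi a, f' x = m - m₀ := by
  have hcover := (aecover_Ioi_of_Ioi (μ := volume) (l := 𝓝[>] a) (a := id)
    nhdsWithin_le_nhds).integral_tendsto_of_countably_generated hint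
  refine tendsto_nhds_unique (hcover.congr' ?_) ((tendsto_const_nhds (x := m)).sub ha)
  filter_upwards [self_mem_nhdsWithin] with b (hb : a < b)
  rw [Measure.restrict_restrict measurableSet_Ioi, id, inter_eq_left.2 (Ioi_subset_Ioi hb.le)]
  exact integral_Ioi_of_hasDerivAt_of_tendsto' (fun x hx => hderiv x (hb.trans_le hx))
    (hint.mono_set (Ioi_subset_Ioi hb.le)) htop

theorem isBigO_cexp_mul_pow {μ : ℂ} {ε : ℝ} (hε : ε < μ.re) (n : ℕ) :
    (fun s : ℝ => Complex.exp (s * μ) * (s : ℂ) ^ n) =O[𝓟 (Iic 0)]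
      fun s => Real.exp (ε * s) := by
  have hδ : 0 < μ.re - ε := sub_pos.2 hε
  refine IsBigO.of_bound (n ! / (μ.re - ε) ^ n)
    (eventually_principal.2 fun s (hs : s ≤ 0) => ?_)
  have hpow : |s| ^ n ≤ n ! / (μ.re - ε) ^ n * Real.exp ((μ.re - ε) * |s|) := by
    have := Real.pow_div_factorial_le_exp ((μ.re - ε) * |s|) (by positivity) n
    rw [mul_pow, div_le_iff₀ (by positivity)] at this
    rw [div_mul_eq_mul_div, le_div_iff₀ (by positivity)]
    linarith
  calc ‖Complex.exp (s * μ) * (s : ℂ) ^ n‖ = Real.exp (s * μ.re) * |s| ^ n := by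
        simp [Complex.norm_exp]
    _ ≤ Real.exp (s * μ.re) * (n ! / (μ.re - ε) ^ n * Real.exp ((μ.re - ε) * |s|)) := by
        gcongr
    _ = n ! / (μ.re - ε) ^ n * ‖Real.exp (ε * s)‖ := by
        rw [Real.norm_of_nonneg (Real.exp_pos _).le, abs_of_nonpos hs, mul_left_comm,
          ← Real.exp_add]
        congr 2
        ring

section ExponentialSeries

variable {E : Type*} [NormedAddCommGroup E] [NormedSpace ℂ E] [CompleteSpace E]

theorem summable_pow_div_factorial_smul {a : ℕ → E} {ρ : ℝ}
    (ha : Summable fun n => ‖a n‖ * ρ ^ n / n !) {z : ℂ} (hz : ‖z‖ ≤ ρ) :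
    Summable fun n => (z ^ n / n !) • a n := by
  refine .of_norm_bounded ha fun n => ?_
  rw [norm_smul, norm_div, norm_pow, Complex.norm_natCast, div_mul_eq_mul_div, mul_comm]
  gcongr

theorem hasSum_deriv_tsum_pow_div_factorial_smul {a : ℕ → E} {ρ : ℝ}
    (ha : Summable fun n => ‖a n‖ * ρ ^ n / n !) {z : ℂ} (hz : ‖z‖ < ρ) :
    HasSum (fun n : ℕ => ((n : ℂ) * z ^ (n - 1) / n !) • a n)
      (deriv (fun w : ℂ => ∑' n, (w ^ n / n !) • a n) z) := by
  obtain ⟨ρ', hzρ', hρ'ρ⟩ := exists_between hz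
  have hρ' : 0 < ρ' := (norm_nonneg z).trans_lt hzρ'
  have hρ : 0 < ρ := hρ'.trans hρ'ρ
  obtain ⟨K, hK⟩ := (tendsto_self_mul_const_pow_of_lt_one (div_nonneg hρ'.le hρ.le)
    ((div_lt_one hρ).2 hρ'ρ)).bddAbove_range
  have hK0 : 0 ≤ K := by simpa using hK (mem_range_self 0)
  have hgrowth (n : ℕ) : (n : ℝ) * ρ' ^ (n - 1) ≤ K / ρ' * ρ ^ n := by
    rcases n with _ | n
    · simpa using div_nonneg hK0 hρ'.le
    have := hK (mem_range_self (n + 1))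
    rw [div_pow, ← mul_div_assoc, div_le_iff₀ (by positivity)] at this
    rw [Nat.add_sub_cancel, div_mul_eq_mul_div, le_div_iff₀ hρ', mul_assoc, ← pow_succ]
    exact this
  have hbound (n : ℕ) (w : ℂ) (hw : w ∈ Metric.ball 0 ρ') :
      ‖((n : ℂ) * w ^ (n - 1) / n !) • a n‖ ≤ K / ρ' * (‖a n‖ * ρ ^ n / n !) := by
    rw [mem_ball_zero_iff] at hw
    rw [norm_smul, norm_div, norm_mul, norm_pow, Complex.norm_natCast, Complex.norm_natCast]
    calc (n : ℝ) * ‖w‖ ^ (n - 1) / n ! * ‖a n‖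
        ≤ n * ρ' ^ (n - 1) / n ! * ‖a n‖ := by gcongr
      _ ≤ K / ρ' * ρ ^ n / n ! * ‖a n‖ := by gcongr ?_ / _ * _; exact hgrowth n
      _ = K / ρ' * (‖a n‖ * ρ ^ n / n !) := by ring
  have hz' : z ∈ Metric.ball 0 ρ' := mem_ball_zero_iff.2 hzρ'
  have hderiv := hasDerivAt_tsum_of_isPreconnected (g := fun n (w : ℂ) => (w ^ n / n !) • a n)
    (ha.mul_left (K / ρ')) Metric.isOpen_ball (convex_ball 0 ρ').isPreconnected
    (fun n w _ => ((hasDerivAt_pow n w).div_const (n ! : ℂ)).smul_const (a n)) hbound hz'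
    (summable_pow_div_factorial_smul ha hz.le) hz'
  rw [hderiv.deriv]
  exact (Summable.of_norm_bounded (ha.mul_left (K / ρ')) fun n => hbound n z hz').hasSum

end ExponentialSeries

section MatrixFunctions

variable {r : ℕ}

/- The Frobenius normed structures, rebuilt on the ring and topology of `Matrix` itself. Terms
such as `exp M` are elaborated with those, so this lets the general lemmas about `exp` rewrite
them, and lets `Integrable` find a `ContinuousENorm` for matrix-valued functions. -/
abbrev matrixFrobeniusNormedAddCommGroup (r : ℕ) :
    NormedAddCommGroup (Matrix (Fin r) (Fin r) ℂ) :=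
  { Matrix.frobeniusNormedAddCommGroup with
    toMetricSpace := Matrix.frobeniusNormedAddCommGroup.toMetricSpace.replaceTopology
      (U := instTopologicalSpaceMatrix) rfl }

abbrev matrixFrobeniusNormedRing (r : ℕ) : NormedRing (Matrix (Fin r) (Fin r) ℂ) :=
  { matrixFrobeniusNormedAddCommGroup r, Matrix.instRing with
    norm_mul_le := Matrix.frobenius_norm_mul }

abbrev matrixFrobeniusNormedSpace (R : Type*) [NormedField R] [NormedSpace R ℂ] (r : ℕ) :
    @NormedSpace R (Matrix (Fin r) (Fin r) ℂ) _
      (matrixFrobeniusNormedAddCommGroup r).toSeminormedAddCommGroup :=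
  { norm_smul_le := (Matrix.frobeniusNormedSpace (R := R)).norm_smul_le }

abbrev matrixFrobeniusNormedAlgebra (R : Type*) [NormedField R] [NormedAlgebra R ℂ] (r : ℕ) :
    @NormedAlgebra R (Matrix (Fin r) (Fin r) ℂ) _
      (matrixFrobeniusNormedRing r).toSeminormedRing :=
  { matrixFrobeniusNormedSpace R r, Matrix.instAlgebra with }

attribute [local instance] matrixFrobeniusNormedAddCommGroup matrixFrobeniusNormedRing
  matrixFrobeniusNormedSpace matrixFrobeniusNormedAlgebra

theorem exp_smul_one_add (c : ℂ) (X : Matrix (Fin r) (Fin r) ℂ) :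
    exp (c • (1 : Matrix (Fin r) (Fin r) ℂ) + X) = Complex.exp c • exp X := by
  rw [← Algebra.algebraMap_eq_smul_one, exp_add_of_commute (Algebra.commutes c X),
    ← algebraMap_exp_comm, Algebra.algebraMap_eq_smul_one, smul_mul_assoc, one_mul,
    Complex.exp_eq_exp_ℂ]

theorem exp_smul_mulVec_eq_sum {M : Matrix (Fin r) (Fin r) ℂ} {μ : ℂ} {k : ℕ}
    {v : Fin r → ℂ} (hv : (M - μ • 1) ^ k *ᵥ v = 0) (s : ℂ) :
    exp (s • M) *ᵥ v = ∑ n ∈ Finset.range k,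
      (Complex.exp (s * μ) * s ^ n) • ((n ! : ℂ)⁻¹ • ((M - μ • 1) ^ n *ᵥ v)) := by
  set N := M - μ • 1
  have hseries :
      HasSum (fun n => ((n ! : ℂ)⁻¹ • (s • N) ^ n) *ᵥ v) (exp (s • N) *ᵥ v) :=
    (exp_series_hasSum_exp' (𝕂 := ℂ) (s • N)).map
      (Matrix.mulVec.addMonoidHomLeft v) (continuous_id.matrix_mulVec continuous_const)
  have hfinite : HasSum (fun n => ((n ! : ℂ)⁻¹ • (s • N) ^ n) *ᵥ v)
      (∑ n ∈ Finset.range k, ((n ! : ℂ)⁻¹ • (s • N) ^ n) *ᵥ v) := by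
    refine hasSum_sum_of_ne_finset_zero fun n hn => ?_
    obtain ⟨j, rfl⟩ := Nat.exists_eq_add_of_le' (not_lt.1 (Finset.mem_range.not.1 hn))
    rw [smul_pow, Matrix.smul_mulVec, Matrix.smul_mulVec, pow_add N, ← Matrix.mulVec_mulVec, hv,
      Matrix.mulVec_zero, smul_zero, smul_zero]
  rw [show s • M = (s * μ) • 1 + s • N by module, exp_smul_one_add, Matrix.smul_mulVec,
    hseries.unique hfinite, Finset.smul_sum]
  refine Finset.sum_congr rfl fun n _ => ?_
  rw [smul_pow, Matrix.smul_mulVec, Matrix.smul_mulVec, smul_comm ((n ! : ℂ)⁻¹) (s ^ n),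
    mul_smul]

theorem isBigO_exp_smul_mulVec_of_mem_maxGenEigenspace {M : Matrix (Fin r) (Fin r) ℂ} {μ : ℂ}
    {ε : ℝ} (hε : ε < μ.re) {v : Fin r → ℂ}
    (hv : v ∈ Module.End.maxGenEigenspace (Matrix.toLin' M) μ) :
    (fun s : ℝ => exp ((s : ℂ) • M) *ᵥ v) =O[𝓟 (Iic 0)] fun s => Real.exp (ε * s) := by
  obtain ⟨k, hk⟩ := (Module.End.mem_maxGenEigenspace _ _ _).1 hv
  have hk' : (M - μ • 1) ^ k *ᵥ v = 0 := by
    rwa [← Matrix.toLin'_apply, Matrix.toLin'_pow, map_sub, map_smul, Matrix.toLin'_one]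
  simp_rw [exp_smul_mulVec_eq_sum hk']
  exact IsBigO.fun_sum fun n _ =>
    ((ContinuousLinearMap.toSpanSingleton ℂ _).isBigO_comp _ _).trans (isBigO_cexp_mul_pow hε n)

theorem isBigO_exp_smul_mulVec {M : Matrix (Fin r) (Fin r) ℂ} {ε : ℝ}
    (hM : ∀ μ ∈ spectrum ℂ M, ε < μ.re) (v : Fin r → ℂ) :
    (fun s : ℝ => exp ((s : ℂ) • M) *ᵥ v) =O[𝓟 (Iic 0)] fun s => Real.exp (ε * s) := by
  have hv : v ∈ ⨆ μ, Module.End.maxGenEigenspace (Matrix.toLin' M) μ := by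
    rw [Module.End.iSup_maxGenEigenspace_eq_top]; trivial
  refine Submodule.iSup_induction _ (motive := fun v =>
    (fun s : ℝ => exp ((s : ℂ) • M) *ᵥ v) =O[𝓟 (Iic 0)] fun s => Real.exp (ε * s)) hv
    (fun μ x hx => ?_) (by simp only [Matrix.mulVec_zero]; exact isBigO_zero _ _)
    (fun x y hx hy => by simpa [Matrix.mulVec_add] using hx.add hy)
  rcases eq_or_ne x 0 with rfl | hx0
  · simp only [Matrix.mulVec_zero]; exact isBigO_zero _ _
  refine isBigO_exp_smul_mulVec_of_mem_maxGenEigenspace (hM μ ?_) hx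
  obtain ⟨k, hk⟩ := (Module.End.mem_maxGenEigenspace _ _ _).1 hx
  have : Module.End.HasGenEigenvalue (Matrix.toLin' M) μ k :=
    Module.End.hasGenEigenvalue_iff.2 ((Submodule.ne_bot_iff _).2
      ⟨x, Module.End.mem_genEigenspace_nat.2 hk, hx0⟩)
  rw [← Matrix.spectrum_toLin']
  exact (Module.End.hasEigenvalue_of_hasGenEigenvalue this).mem_spectrum

theorem isBigO_exp_smul {M : Matrix (Fin r) (Fin r) ℂ} {ε : ℝ}
    (hM : ∀ μ ∈ spectrum ℂ M, ε < μ.re) :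
    (fun s : ℝ => exp ((s : ℂ) • M)) =O[𝓟 (Iic 0)] fun s => Real.exp (ε * s) := by
  let ofCols : (Fin r → Fin r → ℂ) →L[ℂ] Matrix (Fin r) (Fin r) ℂ :=
    LinearMap.toContinuousLinearMap
      { toFun := fun g => (Matrix.of g)ᵀ
        map_add' := fun _ _ => rfl
        map_smul' := fun _ _ => rfl }
  have hcols (X : Matrix (Fin r) (Fin r) ℂ) : ofCols (fun j => X *ᵥ Pi.single j 1) = X := by
    ext i j
    exact congr_fun (X.mulVec_single_one j) i
  exact ((ofCols.isBigO_comp _ _).congr_left fun s => hcols _).trans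
    (isBigO_pi.2 fun j => isBigO_exp_smul_mulVec hM _)

theorem PosStable.exists_pos_lt_re {M : Matrix (Fin r) (Fin r) ℂ} (hM : PosStable M) :
    ∃ ε > 0, ∀ μ ∈ spectrum ℂ M, ε < μ.re := by
  have := (M.finite_spectrum.eventually_all (l := 𝓝[>] (0 : ℝ))).2
    fun μ hμ => eventually_nhdsWithin_of_eventually_nhds (eventually_lt_nhds (hM μ hμ))
  exact (this.and self_mem_nhdsWithin).exists.imp fun ε h => ⟨h.2, h.1⟩

theorem exists_re_lt (M : Matrix (Fin r) (Fin r) ℂ) :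
    ∃ κ > 0, ∀ μ ∈ spectrum ℂ M, μ.re < κ :=
  (((M.finite_spectrum.eventually_all (l := atTop)).2 fun μ _ => eventually_gt_atTop μ.re).and
    (eventually_gt_atTop 0)).exists.imp fun _ h => ⟨h.2, h.1⟩

theorem PosStable.add_one {M : Matrix (Fin r) (Fin r) ℂ} (hM : PosStable M) :
    PosStable (M + 1) := by
  intro μ hμ
  have h : (μ - 1) + 1 ∈ spectrum ℂ (algebraMap ℂ _ 1 + M) := by
    rwa [sub_add_cancel, map_one, add_comm]
  have := hM _ (spectrum.add_mem_add_iff.1 h)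
  rw [Complex.sub_re, Complex.one_re] at this
  linarith

theorem PosStable.isUnit {M : Matrix (Fin r) (Fin r) ℂ} (hM : PosStable M) : IsUnit M :=
  not_not.1 fun h => (hM 0 ((spectrum.zero_mem_iff ℂ).2 h)).false

theorem matRPow_sub_one (M : Matrix (Fin r) (Fin r) ℂ) {t : ℝ} (ht : 0 < t) :
    matRPow (M - 1) t = (t : ℂ)⁻¹ • matRPow M t := by
  rw [matRPow,
    show (Real.log t : ℂ) • (M - 1) = (-(Real.log t : ℂ)) • 1 + (Real.log t : ℂ) • M by module,
    exp_smul_one_add, ← Complex.ofReal_neg, ← Complex.ofReal_exp, Real.exp_neg, Real.exp_log ht,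
    Complex.ofReal_inv, matRPow]

theorem hasDerivAt_matRPow (M : Matrix (Fin r) (Fin r) ℂ) {t : ℝ} (ht : 0 < t) :
    HasDerivAt (matRPow M) (M * matRPow (M - 1) t) t := by
  have hlog : HasDerivAt (fun u : ℝ => (Real.log u : ℂ)) (t⁻¹ : ℝ) t :=
    (Real.hasDerivAt_log ht.ne').ofReal_comp
  refine ((hasDerivAt_exp_smul_const M (Real.log t : ℂ)).scomp t hlog).congr_deriv ?_
  rw [matRPow_sub_one M ht, mul_smul_comm, Complex.ofReal_inv,
    ((Commute.refl M).smul_left (Real.log t : ℂ)).exp_left.eq]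
  rfl

theorem continuousOn_matRPow (M : Matrix (Fin r) (Fin r) ℂ) : ContinuousOn (matRPow M) (Ioi 0) :=
  fun _ ht => (hasDerivAt_matRPow M ht).continuousAt.continuousWithinAt

theorem isBigO_matRPow_Ioc {M : Matrix (Fin r) (Fin r) ℂ} {ε : ℝ}
    (hM : ∀ μ ∈ spectrum ℂ M, ε < μ.re) :
    matRPow M =O[𝓟 (Ioc 0 1)] fun t => t ^ ε := by
  refine ((isBigO_exp_smul hM).comp_tendsto (tendsto_principal_principal.2
    fun t ht => Real.log_nonpos ht.1.le ht.2)).congr' (.of_forall fun t => rfl)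
    (eventuallyEq_principal.2 fun t ht => ?_)
  rw [Function.comp_apply, Real.rpow_def_of_pos ht.1, mul_comm]

theorem isBigO_matRPow_Ici {M : Matrix (Fin r) (Fin r) ℂ} {κ : ℝ}
    (hM : ∀ μ ∈ spectrum ℂ M, μ.re < κ) :
    matRPow M =O[𝓟 (Ici 1)] fun t => t ^ κ := by
  have hneg : ∀ μ ∈ spectrum ℂ (-M), -κ < μ.re := by
    intro μ hμ
    rw [← spectrum.neg_eq] at hμ
    simpa using neg_lt_neg (hM _ hμ)
  refine ((isBigO_exp_smul hneg).comp_tendsto (tendsto_principal_principal.2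
    fun t (ht : 1 ≤ t) => neg_nonpos.2 (Real.log_nonneg ht))).congr'
    (.of_forall fun t => ?_) (eventuallyEq_principal.2 fun t (ht : 1 ≤ t) => ?_)
  · simp [matRPow]
  · rw [Function.comp_apply, Real.rpow_def_of_pos (zero_lt_one.trans_le ht), neg_mul_neg,
      mul_comm]

theorem integrableOn_matGamma_integrand {M : Matrix (Fin r) (Fin r) ℂ} (hM : PosStable M) :
    IntegrableOn (fun t : ℝ => Real.exp (-t) • matRPow (M - 1) t) (Ioi 0) := by
  obtain ⟨ε, hε, hMε⟩ := hM.exists_pos_lt_re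
  obtain ⟨κ, hκ, hMκ⟩ := exists_re_lt (M - 1)
  have hcont : ContinuousOn (fun t : ℝ => Real.exp (-t) • matRPow (M - 1) t) (Ioi 0) :=
    (Real.continuous_exp.comp continuous_neg).continuousOn.smul (continuousOn_matRPow _)
  rw [← Ioc_union_Ioi_eq_Ioi zero_le_one]
  refine IntegrableOn.union ?_ ?_
  · refine .of_isBigO_principal measurableSet_Ioc
      ((hcont.mono Ioc_subset_Ioi_self).aestronglyMeasurable measurableSet_Ioc) ?_
      ((Real.GammaIntegral_convergent hε).mono_set Ioc_subset_Ioi_self)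
    refine ((isBigO_refl (fun t : ℝ => Real.exp (-t) * t⁻¹) _).smul
      (isBigO_matRPow_Ioc hMε)).congr' (eventuallyEq_principal.2 fun t ht => ?_)
      (eventuallyEq_principal.2 fun t ht => ?_)
    · rw [matRPow_sub_one M ht.1, mul_smul, ← Complex.ofReal_inv, Complex.coe_smul]
    · rw [smul_eq_mul, Real.rpow_sub_one ht.1.ne']
      ring
  · refine .of_isBigO_principal measurableSet_Ioi
      ((hcont.mono (Ioi_subset_Ioi zero_le_one)).aestronglyMeasurable measurableSet_Ioi) ?_
      ((Real.GammaIntegral_convergent (by positivity : 0 < κ + 1)).mono_set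
        (Ioi_subset_Ioi zero_le_one))
    refine ((isBigO_refl (fun t : ℝ => Real.exp (-t)) _).smul
      ((isBigO_matRPow_Ici hMκ).mono (principal_mono.2 Ioi_subset_Ici_self))).congr_right
      fun t => ?_
    rw [smul_eq_mul, add_sub_cancel_right]

theorem tendsto_exp_neg_smul_matRPow_nhdsGT {M : Matrix (Fin r) (Fin r) ℂ} (hM : PosStable M) :
    Tendsto (fun t : ℝ => Real.exp (-t) • matRPow M t) (𝓝[>] 0) (𝓝 0) := by
  obtain ⟨ε, hε, hMε⟩ := hM.exists_pos_lt_re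
  have hpow : Tendsto (fun t : ℝ => t ^ ε) (𝓝[>] 0) (𝓝 0) := by
    simpa [Real.zero_rpow hε.ne'] using
      ((Real.continuousAt_rpow_const 0 ε (.inr hε.le)).tendsto).mono_left nhdsWithin_le_nhds
  have hexp : Tendsto (fun t : ℝ => Real.exp (-t)) (𝓝[>] 0) (𝓝 1) := by
    have hcont : Continuous fun t : ℝ => Real.exp (-t) := by fun_prop
    simpa using (hcont.tendsto 0).mono_left nhdsWithin_le_nhds
  simpa using hexp.smul (((isBigO_matRPow_Ioc hMε).mono
    (le_principal_iff.2 (Ioc_mem_nhdsGT one_pos))).trans_tendsto hpow)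

theorem tendsto_exp_neg_smul_matRPow_atTop (M : Matrix (Fin r) (Fin r) ℂ) :
    Tendsto (fun t : ℝ => Real.exp (-t) • matRPow M t) atTop (𝓝 0) := by
  obtain ⟨κ, -, hMκ⟩ := exists_re_lt M
  refine ((isBigO_refl (fun t : ℝ => Real.exp (-t)) _).smul ((isBigO_matRPow_Ici hMκ).mono
    (le_principal_iff.2 (Ici_mem_atTop 1)))).trans_tendsto ?_
  simpa [mul_comm] using tendsto_rpow_mul_exp_neg_mul_atTop_nhds_zero κ 1 one_pos

theorem matGamma_add_one {M : Matrix (Fin r) (Fin r) ℂ} (hM : PosStable M) :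
    matGamma (M + 1) = M * matGamma M := by
  have hint := integrableOn_matGamma_integrand hM
  have hint' := integrableOn_matGamma_integrand hM.add_one
  simp only [add_sub_cancel_right] at hint'
  have hderiv : ∀ t ∈ Ioi (0 : ℝ), HasDerivAt (fun t => Real.exp (-t) • matRPow M t)
      (M * (Real.exp (-t) • matRPow (M - 1) t) - Real.exp (-t) • matRPow M t) t := by
    intro t ht
    refine ((hasDerivAt_neg t).exp.smul (hasDerivAt_matRPow M ht)).congr_deriv ?_
    rw [mul_smul_comm, mul_neg_one, neg_smul, ← sub_eq_add_neg]
  have hFTC := integral_Ioi_of_hasDerivAt_of_tendsto_nhdsGT hderiv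
    ((hint.const_mul M).sub hint') (tendsto_exp_neg_smul_matRPow_nhdsGT hM)
    (tendsto_exp_neg_smul_matRPow_atTop M)
  rw [sub_zero, integral_sub (hint.const_mul M) hint', integral_const_mul_of_integrable hint,
    sub_eq_zero] at hFTC
  rw [matGamma, matGamma, add_sub_cancel_right]
  exact hFTC.symm

theorem Commute.matGamma_right {X M : Matrix (Fin r) (Fin r) ℂ} (h : Commute X M) :
    Commute X (matGamma M) := by
  by_cases hint : IntegrableOn (fun t : ℝ => Real.exp (-t) • matRPow (M - 1) t) (Ioi 0)
  · have hpt (t : ℝ) : Commute X (Real.exp (-t) • matRPow (M - 1) t) :=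
      ((h.sub_right (.one_right X)).smul_right _).exp_right.smul_right _
    calc X * matGamma M = ∫ t in Ioi 0, X * (Real.exp (-t) • matRPow (M - 1) t) :=
          (integral_const_mul_of_integrable hint).symm
      _ = ∫ t in Ioi 0, Real.exp (-t) • matRPow (M - 1) t * X :=
          integral_congr_ae (.of_forall fun t => (hpt t).eq)
      _ = matGamma M * X := integral_mul_const_of_integrable hint
  · rw [show matGamma M = 0 from integral_undef hint]
    exact .zero_right X

theorem matGamma_sub_one_inv {M : Matrix (Fin r) (Fin r) ℂ} (hM : PosStable (M - 1)) :
    (matGamma (M - 1))⁻¹ = (M - 1) * (matGamma M)⁻¹ := by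
  have hunit : IsUnit (M - 1).det := (Matrix.isUnit_iff_isUnit_det _).1 hM.isUnit
  have hΓ : matGamma M = matGamma (M - 1) * (M - 1) := by
    rw [← ((Commute.refl (M - 1)).matGamma_right).eq, ← matGamma_add_one hM, sub_add_cancel]
  rw [hΓ, Matrix.mul_inv_rev, Matrix.mul_nonsing_inv_cancel_left _ _ hunit]

theorem Rcoeff_sub_one {p q : ℕ} (A B : Matrix (Fin r) (Fin r) ℂ)
    (C : Fin p → Matrix (Fin r) (Fin r) ℂ) (D : Fin q → Matrix (Fin r) (Fin r) ℂ) {n : ℕ}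
    (h : PosStable ((n : ℂ) • A + (B - 1))) :
    Rcoeff A (B - 1) C D n = ((n : ℂ) • A + B - 1) * Rcoeff A B C D n := by
  rw [← add_sub_assoc] at h
  simp only [Rcoeff, ← add_sub_assoc, matGamma_sub_one_inv h, mul_assoc]

end MatrixFunctions

theorem pRq_zA_deriv_general {r p q : ℕ}
    (A B : Matrix (Fin r) (Fin r) ℂ)
    (C : Fin p → Matrix (Fin r) (Fin r) ℂ) (D : Fin q → Matrix (Fin r) (Fin r) ℂ)
    (hGamma' : ∀ n : ℕ, PosStable ((n : ℂ) • A + (B - 1)))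
    (z : ℂ) (hz : InRegion A B C D z) :
    z • (A * deriv (Rfun A B C D) z)
      = Rfun A (B - 1) C D z - (B - 1) * Rfun A B C D z := by
  obtain ⟨ρ, hzρ, hsum⟩ := hz
  have hR : HasSum (fun n => (z ^ n / n !) • Rcoeff A B C D n) (Rfun A B C D z) :=
    (summable_pow_div_factorial_smul hsum hzρ.le).hasSum
  have hR' : HasSum (fun n => (z ^ n / n !) • Rcoeff A (B - 1) C D n)
      (A * (z • deriv (Rfun A B C D) z) + (B - 1) * Rfun A B C D z) := by
    refine (((hasSum_deriv_tsum_pow_div_factorial_smul hsum hzρ).const_smul z).mul_left A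
      |>.add (hR.mul_left (B - 1))).congr_fun fun n => ?_
    have hpow : z * (n * z ^ (n - 1) / n !) = n * (z ^ n / n !) := by
      rcases n with _ | n
      · simp
      · rw [Nat.add_sub_cancel, pow_succ]; ring
    rw [Rcoeff_sub_one A B C D (hGamma' n), smul_smul, hpow, add_sub_assoc, add_mul,
      smul_mul_assoc, mul_smul_comm, mul_smul_comm]
    module
  rw [eq_sub_iff_add_eq, ← mul_smul_comm]
  exact hR'.tsum_eq.symm

/-- The differential formula `z A (d/dz) ₚR_q(A,B;z) = ₚR_q(A,B−I;z) − (B−I) ₚR_q(A,B;z)`. -/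
theorem pRq_zA_deriv {r p q : ℕ}
    (A B : Matrix (Fin r) (Fin r) ℂ)
    (C : Fin p → Matrix (Fin r) (Fin r) ℂ) (D : Fin q → Matrix (Fin r) (Fin r) ℂ)
    (hDinv : ∀ (j : Fin q) (k : ℕ),
      IsUnit (D j + (k : ℂ) • (1 : Matrix (Fin r) (Fin r) ℂ)))
    (hA : PosStable A) (hB : PosStable (B - 1))
    (hGamma : ∀ n : ℕ, PosStable ((n : ℂ) • A + B))
    (hGamma' : ∀ n : ℕ, PosStable ((n : ℂ) • A + (B - 1)))
    (hAB : A * B = B * A)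
    (z : ℂ) (hz : InRegion A B C D z) :
    z • (A * deriv (Rfun A B C D) z)
      = Rfun A (B - 1) C D z - (B - 1) * Rfun A B C D z :=
  pRq_zA_deriv_general A B C D hGamma' z hz

end
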